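/- For u on the unit circle with Re u > 1/4 (u ≠ 1 allowed), the Hermitian form H_u has signature (3,1), i.e. three positive and one negative eigenvalue; for Re u < 1/4 (and u ≠ -1), H_u is definite. -/

import Mathlib

open Matrix
open scoped ComplexOrder

noncomputable section

/-- The value f(s,t) = -1 - s + 4s² + i(-1+4s)t. -/
def fH (s t : ℝ) : ℂ := ((-1 - s + 4*s^2 : ℝ) : ℂ) + Complex.I * (((-1 + 4*s)*t : ℝ) : ℂ)

/-- The Hermitian matrix H_u, where s = Re u and t = Im u. -/
def Hmat (u : ℂ) : Matrix (Fin 4) (Fin 4) ℂ :=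
  !![((-2 + 4*u.re : ℝ) : ℂ), fH u.re u.im, fH u.re u.im, fH u.re u.im;
     (starRingEnd ℂ) (fH u.re u.im), ((-2 + 4*u.re : ℝ) : ℂ), -1, -1;
     (starRingEnd ℂ) (fH u.re u.im), -1, ((-2 + 4*u.re : ℝ) : ℂ), -1;
     (starRingEnd ℂ) (fH u.re u.im), -1, -1, ((-2 + 4*u.re : ℝ) : ℂ)]

namespace SigAux

/-- The congruence matrix (columns: (0,1,-1,0), (0,1,1,-2), (0,1,1,1),
(c, -3 conj f, -3 conj f, -3 conj f) with c = 12s-12). -/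
def Pm (u : ℂ) : Matrix (Fin 4) (Fin 4) ℂ :=
  !![0, 0, 0, ((12*u.re - 12 : ℝ) : ℂ);
     1, 1, 1, -3 * (starRingEnd ℂ) (fH u.re u.im);
     -1, 1, 1, -3 * (starRingEnd ℂ) (fH u.re u.im);
     0, -2, 1, -3 * (starRingEnd ℂ) (fH u.re u.im)]

def dvec (s : ℝ) : Fin 4 → ℂ :=
  ![((8*s-2:ℝ):ℂ), ((24*s-6:ℝ):ℂ), ((12*s-12:ℝ):ℂ), ((-72*(s-1)*(4*s-1)*(s+1):ℝ):ℂ)]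

set_option maxHeartbeats 1000000 in
lemma key (u : ℂ) (hst : u.re^2 + u.im^2 = 1) :
    (Pm u)ᴴ * Hmat u * Pm u = Matrix.diagonal (dvec u.re) := by
  have hstC : (u.re:ℂ)^2 + (u.im:ℂ)^2 = 1 := by exact_mod_cast hst
  have hI : Complex.I^2 = -1 := Complex.I_sq
  ext i j
  fin_cases i <;> fin_cases j <;>
    simp [Pm, Hmat, fH, dvec, Matrix.mul_apply, Fin.sum_univ_four, Matrix.conjTranspose_apply,
      Matrix.diagonal_apply, map_add, _root_.map_mul, map_sub, map_neg, map_ofNat,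
      Complex.conj_ofReal, Complex.conj_I, Matrix.vecHead, Matrix.vecTail, Function.comp] <;>
    push_cast <;>
    (try ring) <;>
    linear_combination (-(9:ℂ)*(12*(u.re:ℂ)-12)*(4*(u.re:ℂ)-1)^2) * hstC +
          (9*(12*(u.re:ℂ)-12)*(4*(u.re:ℂ)-1)^2*(u.im:ℂ)^2) * hI

lemma det_Pm (u : ℂ) : (Pm u).det = 72 * (1 - (u.re:ℂ)) := by
  simp [Pm, Matrix.det_succ_row_zero, Fin.sum_univ_succ, Matrix.det_fin_three, Matrix.vecHead, Matrix.vecTail, Function.comp, Matrix.submatrix, Fin.castSucc, Fin.castAdd, Fin.castLE]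
  simp [show (Fin.succAbove (3 : Fin 4) (2 : Fin 3)) = 2 from by decide]
  push_cast
  ring

lemma isUnit_Pm (u : ℂ) (hs : u.re ≠ 1) : IsUnit (Pm u) := by
  rw [Matrix.isUnit_iff_isUnit_det, det_Pm, isUnit_iff_ne_zero]
  intro h
  rcases mul_eq_zero.mp h with h | h
  · norm_num at h
  · rw [sub_eq_zero] at h
    exact hs (by exact_mod_cast h.symm)

/-- Positive definiteness transfers through a congruence. -/
lemma posDef_of_congr {n : Type*} [Fintype n] [DecidableEq n] {A D P : Matrix n n ℂ}
    (hP : IsUnit P) (h : Pᴴ * A * P = D) (hD : D.PosDef) : A.PosDef := by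
  have hdet : IsUnit P.det := (Matrix.isUnit_iff_isUnit_det P).mp hP
  have hPP : P * P⁻¹ = 1 := Matrix.mul_nonsing_inv P hdet
  have hPP' : P⁻¹ * P = 1 := Matrix.nonsing_inv_mul P hdet
  have c1 : (P⁻¹)ᴴ * Pᴴ = 1 := by rw [← Matrix.conjTranspose_mul, hPP, Matrix.conjTranspose_one]
  have hA : A = (P⁻¹)ᴴ * D * P⁻¹ := by
    rw [← h]
    calc A = ((P⁻¹)ᴴ * Pᴴ) * A * (P * P⁻¹) := by rw [c1, hPP, Matrix.one_mul, Matrix.mul_one]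
    _ = (P⁻¹)ᴴ * (Pᴴ * A * P) * P⁻¹ := by simp only [Matrix.mul_assoc]
  rw [hA]
  refine Matrix.PosDef.of_dotProduct_mulVec_pos ?_ ?_
  · exact Matrix.isHermitian_conjTranspose_mul_mul _ hD.1
  · intro x hx
    have hx' : P⁻¹ *ᵥ x ≠ 0 := by
      intro h0
      apply hx
      have h1 : P *ᵥ (P⁻¹ *ᵥ x) = 0 := by rw [h0, Matrix.mulVec_zero]
      rwa [Matrix.mulVec_mulVec, hPP, Matrix.one_mulVec] at h1
    simpa only [Matrix.star_mulVec, Matrix.dotProduct_mulVec, Matrix.vecMul_vecMul,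
      Matrix.mulVec_mulVec, Matrix.conjTranspose_nonsing_inv, Matrix.mul_assoc]
      using hD.dotProduct_mulVec_pos hx'

set_option maxHeartbeats 1000000 in
lemma case1_lt (u : ℂ) (hst : u.re^2 + u.im^2 = 1) (hgt : 1/4 < u.re) (hlt : u.re < 1) :
    ∃ P : Matrix (Fin 4) (Fin 4) ℂ, IsUnit P ∧
        Pᴴ * Hmat u * P = Matrix.diagonal ![1, 1, 1, -1] := by
  have h1 : (0:ℝ) < 8*u.re-2 := by linarith
  have h2 : (0:ℝ) < 24*u.re-6 := by linarith
  have h3 : (0:ℝ) < 12-12*u.re := by linarith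
  have h4 : (0:ℝ) < -72*(u.re-1)*(4*u.re-1)*(u.re+1) := by
    nlinarith [mul_pos (mul_pos (show (0:ℝ) < 1-u.re by linarith)
      (show (0:ℝ) < 4*u.re-1 by linarith)) (show (0:ℝ) < u.re+1 by linarith)]
  set b1 : ℝ := Real.sqrt (8*u.re-2) with hb1d
  set b2 : ℝ := Real.sqrt (24*u.re-6) with hb2d
  set b3 : ℝ := Real.sqrt (12-12*u.re) with hb3d
  set b4 : ℝ := Real.sqrt (-72*(u.re-1)*(4*u.re-1)*(u.re+1)) with hb4d
  have hb1 : b1^2 = 8*u.re-2 := Real.sq_sqrt h1.le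
  have hb2 : b2^2 = 24*u.re-6 := Real.sq_sqrt h2.le
  have hb3 : b3^2 = 12-12*u.re := Real.sq_sqrt h3.le
  have hb4 : b4^2 = -72*(u.re-1)*(4*u.re-1)*(u.re+1) := Real.sq_sqrt h4.le
  have hb1C : (b1:ℂ)^2 = 8*(u.re:ℂ)-2 := by exact_mod_cast hb1
  have hb2C : (b2:ℂ)^2 = 24*(u.re:ℂ)-6 := by exact_mod_cast hb2
  have hb3C : (b3:ℂ)^2 = 12-12*(u.re:ℂ) := by exact_mod_cast hb3
  have hb4C : (b4:ℂ)^2 = -72*((u.re:ℂ)-1)*(4*(u.re:ℂ)-1)*((u.re:ℂ)+1) := by exact_mod_cast hb4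
  have hb1p : 0 < b1 := Real.sqrt_pos.mpr h1
  have hb2p : 0 < b2 := Real.sqrt_pos.mpr h2
  have hb3p : 0 < b3 := Real.sqrt_pos.mpr h3
  have hb4p : 0 < b4 := Real.sqrt_pos.mpr h4
  have hb1n : (b1:ℂ) ≠ 0 := by exact_mod_cast hb1p.ne'
  have hb2n : (b2:ℂ) ≠ 0 := by exact_mod_cast hb2p.ne'
  have hb3n : (b3:ℂ) ≠ 0 := by exact_mod_cast hb3p.ne'
  have hb4n : (b4:ℂ) ≠ 0 := by exact_mod_cast hb4p.ne'
  set W : Matrix (Fin 4) (Fin 4) ℂ :=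
    !![((b1⁻¹:ℝ):ℂ),0,0,0; 0,((b2⁻¹:ℝ):ℂ),0,0; 0,0,0,((b3⁻¹:ℝ):ℂ); 0,0,((b4⁻¹:ℝ):ℂ),0] with hW
  have hWdet : W.det = -(((b1⁻¹*b2⁻¹*b3⁻¹*b4⁻¹ : ℝ)):ℂ) := by
    simp [hW, Matrix.det_succ_row_zero, Fin.sum_univ_succ, Matrix.det_fin_three,
      Matrix.vecHead, Matrix.vecTail, Function.comp, Matrix.submatrix,
      Fin.castSucc, Fin.castAdd, Fin.castLE]
    push_cast
    ring
  have hWunit : IsUnit W := by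
    rw [Matrix.isUnit_iff_isUnit_det, hWdet, isUnit_iff_ne_zero, neg_ne_zero]
    push_cast
    simp [hb1n, hb2n, hb3n, hb4n]
  refine ⟨Pm u * W, (isUnit_Pm u (by linarith)).mul hWunit, ?_⟩
  have hassoc : (Pm u * W)ᴴ * Hmat u * (Pm u * W)
      = Wᴴ * ((Pm u)ᴴ * Hmat u * Pm u) * W := by
    rw [Matrix.conjTranspose_mul]
    simp only [Matrix.mul_assoc]
  rw [hassoc, key u hst]
  ext i j
  fin_cases i <;> fin_cases j <;>
    simp [hW, dvec, Matrix.mul_apply, Fin.sum_univ_four, Matrix.conjTranspose_apply,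
      Matrix.diagonal_apply, Complex.conj_ofReal,
      Matrix.vecHead, Matrix.vecTail, Function.comp] <;>
    push_cast <;>
    (try ring) <;>
    field_simp <;>
    (first
      | linear_combination (-(b1:ℂ)^2) * hb1C
      | linear_combination (-(b2:ℂ)^2) * hb2C
      | linear_combination ((b3:ℂ)^2) * hb3C
      | linear_combination (-(b4:ℂ)^4) * hb4C
      | linear_combination hb1C
      | linear_combination hb2C
      | linear_combination hb3C
      | linear_combination hb4C
      | linear_combination -hb1C
      | linear_combination -hb2C
      | linear_combination -hb3C
      | linear_combination -hb4C)

set_option maxHeartbeats 1000000 in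
lemma case1_eq (u : ℂ) (hre : u.re = 1) (him : u.im = 0) :
    ∃ P : Matrix (Fin 4) (Fin 4) ℂ, IsUnit P ∧
        Pᴴ * Hmat u * P = Matrix.diagonal ![1, 1, 1, -1] := by
  set q1 : ℝ := Real.sqrt 6 with hq1d
  set q2 : ℝ := Real.sqrt 18 with hq2d
  set q3 : ℝ := Real.sqrt 2 with hq3d
  set q4 : ℝ := Real.sqrt 72 with hq4d
  have hq1 : q1^2 = 6 := Real.sq_sqrt (by norm_num)
  have hq2 : q2^2 = 18 := Real.sq_sqrt (by norm_num)
  have hq3 : q3^2 = 2 := Real.sq_sqrt (by norm_num)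
  have hq4 : q4^2 = 72 := Real.sq_sqrt (by norm_num)
  have hq1C : (q1:ℂ)^2 = 6 := by exact_mod_cast hq1
  have hq2C : (q2:ℂ)^2 = 18 := by exact_mod_cast hq2
  have hq3C : (q3:ℂ)^2 = 2 := by exact_mod_cast hq3
  have hq4C : (q4:ℂ)^2 = 72 := by exact_mod_cast hq4
  have hq1p : 0 < q1 := Real.sqrt_pos.mpr (by norm_num)
  have hq2p : 0 < q2 := Real.sqrt_pos.mpr (by norm_num)
  have hq3p : 0 < q3 := Real.sqrt_pos.mpr (by norm_num)
  have hq4p : 0 < q4 := Real.sqrt_pos.mpr (by norm_num)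
  have hq1n : (q1:ℂ) ≠ 0 := by exact_mod_cast hq1p.ne'
  have hq2n : (q2:ℂ) ≠ 0 := by exact_mod_cast hq2p.ne'
  have hq3n : (q3:ℂ) ≠ 0 := by exact_mod_cast hq3p.ne'
  have hq4n : (q4:ℂ) ≠ 0 := by exact_mod_cast hq4p.ne'
  set P1 : Matrix (Fin 4) (Fin 4) ℂ :=
    !![((q3⁻¹:ℝ):ℂ), 0, 0, ((-6*q4⁻¹:ℝ):ℂ);
       0, ((q1⁻¹:ℝ):ℂ), ((q2⁻¹:ℝ):ℂ), ((2*q4⁻¹:ℝ):ℂ);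
       0, ((-q1⁻¹:ℝ):ℂ), ((q2⁻¹:ℝ):ℂ), ((2*q4⁻¹:ℝ):ℂ);
       0, 0, ((-2*q2⁻¹:ℝ):ℂ), ((2*q4⁻¹:ℝ):ℂ)] with hP1
  have hdet : P1.det = ((12*(q1⁻¹*q2⁻¹*q3⁻¹*q4⁻¹) : ℝ):ℂ) := by
    simp [hP1, Matrix.det_succ_row_zero, Fin.sum_univ_succ, Matrix.det_fin_three,
      Matrix.vecHead, Matrix.vecTail, Function.comp, Matrix.submatrix,
      Fin.castSucc, Fin.castAdd, Fin.castLE]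
    push_cast
    ring
  refine ⟨P1, ?_, ?_⟩
  · rw [Matrix.isUnit_iff_isUnit_det, hdet, isUnit_iff_ne_zero]
    push_cast
    simp [hq1n, hq2n, hq3n, hq4n]
  · ext i j
    fin_cases i <;> fin_cases j <;>
      simp [hP1, Hmat, fH, hre, him, Matrix.mul_apply, Fin.sum_univ_four,
        Matrix.conjTranspose_apply, Matrix.diagonal_apply, Complex.conj_ofReal,
        map_add, _root_.map_mul, map_sub, map_neg, map_ofNat, Complex.conj_I,
        Matrix.vecHead, Matrix.vecTail, Function.comp] <;>
      push_cast <;>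
      (try ring) <;>
      (try field_simp) <;>
      (first
        | linear_combination hq1C
        | linear_combination hq2C
        | linear_combination hq3C
        | linear_combination hq4C
        | linear_combination -hq1C
        | linear_combination -hq2C
        | linear_combination -hq3C
        | linear_combination -hq4C
        | exact Or.inl trivial)

end SigAux

/-- for u on the unit circle, the Hermitian form H_u has signature (3,1)
(i.e. is congruent to diag(1,1,1,-1)) when Re u > 1/4, and is definite when Re u < 1/4
(and u ≠ -1). -/
theorem signature_Hu (u : ℂ) (hu : ‖u‖ = 1) (hum1 : u ≠ -1) :
    (u.re > 1/4 → ∃ P : Matrix (Fin 4) (Fin 4) ℂ, IsUnit P ∧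
        Pᴴ * Hmat u * P = Matrix.diagonal ![1, 1, 1, -1]) ∧
    (u.re < 1/4 → (Hmat u).PosDef ∨ (-(Hmat u)).PosDef) := by
  have hst : u.re^2 + u.im^2 = 1 := by
    have h := Complex.sq_norm u
    rw [hu] at h
    simpa [Complex.normSq_apply, sq] using h.symm
  have hs_le : u.re ≤ 1 := by nlinarith [sq_nonneg u.im]
  have hs_gt : -1 < u.re := by
    rcases lt_or_eq_of_le (show -1 ≤ u.re by nlinarith [sq_nonneg u.im]) with h | h
    · exact h
    · exfalso
      apply hum1
      have ht : u.im = 0 := by nlinarith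
      apply Complex.ext
      · simp [← h]
      · simp [ht]
  constructor
  · intro hgt
    rcases lt_or_eq_of_le hs_le with hlt | heq
    · exact SigAux.case1_lt u hst hgt hlt
    · have him : u.im = 0 := by nlinarith
      exact SigAux.case1_eq u heq him
  · intro hlt
    right
    have h : (SigAux.Pm u)ᴴ * (-(Hmat u)) * SigAux.Pm u
        = -(Matrix.diagonal (SigAux.dvec u.re)) := by
      rw [Matrix.mul_neg, Matrix.neg_mul, SigAux.key u hst]
    refine SigAux.posDef_of_congr (SigAux.isUnit_Pm u (by linarith)) h ?_
    rw [Matrix.diagonal_neg, Matrix.posDef_diagonal_iff]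
    intro i
    fin_cases i <;>
      simp [SigAux.dvec, Matrix.vecHead, Matrix.vecTail, Function.comp,
        ← Complex.ofReal_neg] <;>
      (try simp only [← Complex.ofReal_ofNat, ← Complex.ofReal_mul, ← Complex.ofReal_sub,
        ← Complex.ofReal_zero, ← Complex.ofReal_one, ← Complex.ofReal_add, Complex.real_lt_real]) <;>
      nlinarith [mul_pos (mul_pos (show (0:ℝ) < 1-u.re by linarith)
        (show (0:ℝ) < 1-4*u.re by linarith)) (show (0:ℝ) < u.re+1 by linarith)]

end
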